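/- Let ρ be a density matrix on ℂ^{d_A} ⊗ ℂ^{d_B} ⊗ ℂ^{d_E}, and let A₀, A₁ (on ℂ^{d_A}), B₀, B₁ (on ℂ^{d_B}), and E₀, E₁ (on ℂ^{d_E}) be Hermitian matrices with square equal to the identity. Define S_AB = Tr[ρ(A₀⊗(B₀+B₁)⊗I + A₁⊗(B₀−B₁)⊗I)] and S_AE = Tr[ρ(A₀⊗I⊗(E₀+E₁) + A₁⊗I⊗(E₀−E₁))]. Then S_AB² + S_AE² ≤ 8. Consequently, if S_AB > 2 then S_AE < 2. -/

import Mathlib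

open Matrix
open scoped Kronecker ComplexOrder

/-!
For involutions `B₀, B₁` the operators `P = B₀ + B₁`, `Q = B₀ - B₁` anticommute and satisfy
`P² + Q² = 4`; likewise `R = E₀ + E₁`, `S = E₀ - E₁`. These relations alone yield, for all real
`u, v`, the Toner–Verstraete sum-of-squares decomposition
`Y₁² + Y₂² = 16 + 8u² + 8v² - 8u·(A₀P + A₁Q) - 8v·(A₀R + A₁S)` with Hermitian `Y₁, Y₂`.
Its expectation in `ρ` is nonnegative, so `8u S_AB + 8v S_AE ≤ 16 + 8u² + 8v²`, and the choice
`u = S_AB / 2`, `v = S_AE / 2` gives `S_AB² + S_AE² ≤ 8`.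
-/

namespace Matrix

variable {l m n p 𝕜 : Type*}

theorem sub_kronecker [NonUnitalNonAssocRing 𝕜] (A₁ A₂ : Matrix l m 𝕜) (B : Matrix n p 𝕜) :
    (A₁ - A₂) ⊗ₖ B = A₁ ⊗ₖ B - A₂ ⊗ₖ B := by
  ext; simp [sub_mul]

theorem kronecker_sub [NonUnitalNonAssocRing 𝕜] (A : Matrix l m 𝕜) (B₁ B₂ : Matrix n p 𝕜) :
    A ⊗ₖ (B₁ - B₂) = A ⊗ₖ B₁ - A ⊗ₖ B₂ := by
  ext; simp [mul_sub]

theorem neg_kronecker [NonUnitalNonAssocRing 𝕜] (A : Matrix l m 𝕜) (B : Matrix n p 𝕜) :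
    (-A) ⊗ₖ B = -(A ⊗ₖ B) := by
  ext; simp

theorem kronecker_neg [NonUnitalNonAssocRing 𝕜] (A : Matrix l m 𝕜) (B : Matrix n p 𝕜) :
    A ⊗ₖ (-B) = -(A ⊗ₖ B) := by
  ext; simp

theorem PosSemidef.re_trace_mul_mul_self_nonneg [Fintype n] {ρ Y : Matrix n n ℂ}
    (hρ : ρ.PosSemidef) (hY : Y.IsHermitian) : 0 ≤ (ρ * (Y * Y)).trace.re := by
  have hcyc : (ρ * (Y * Y)).trace = (Y * ρ * Yᴴ).trace := by
    rw [hY.eq, ← Matrix.mul_assoc, trace_mul_comm, Matrix.mul_assoc]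
  rw [hcyc]
  exact (Complex.le_def.mp (hρ.mul_mul_conjTranspose_same Y).trace_nonneg).1

end Matrix

section Involution

variable {R : Type*} [Ring R] {x y : R}

theorem add_mul_self_add_sub_mul_self_of_mul_self_eq_one (hx : x * x = 1) (hy : y * y = 1) :
    (x + y) * (x + y) + (x - y) * (x - y) = 4 := by
  calc (x + y) * (x + y) + (x - y) * (x - y) = 2 * (x * x) + 2 * (y * y) := by noncomm_ring
    _ = 4 := by rw [hx, hy]; norm_num

theorem sub_mul_add_eq_neg_add_mul_sub_of_mul_self_eq_one (hx : x * x = 1) (hy : y * y = 1) :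
    (x - y) * (x + y) = -((x + y) * (x - y)) := by
  refine eq_neg_of_add_eq_zero_left ?_
  calc (x - y) * (x + y) + (x + y) * (x - y) = 2 * (x * x) - 2 * (y * y) := by noncomm_ring
    _ = 0 := by rw [hx, hy, sub_self]

end Involution

section SumOfSquares

variable {l m n 𝕜 : Type*} [Fintype l] [Fintype m] [Fintype n]
  [DecidableEq l] [DecidableEq m] [DecidableEq n] [CommRing 𝕜]

theorem chsh_sum_of_squares (A₀ A₁ : Matrix l l 𝕜) (P Q : Matrix m m 𝕜) (R S : Matrix n n 𝕜)
    (hA₀ : A₀ * A₀ = 1) (hA₁ : A₁ * A₁ = 1)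
    (hPQ : P * P + Q * Q = 4) (hQP : Q * P = -(P * Q))
    (hRS : R * R + S * S = 4) (hSR : S * R = -(R * S)) (u v : 𝕜) :
    let Y₁ := A₀ ⊗ₖ (v • P ⊗ₖ 1 + u • 1 ⊗ₖ R) - A₁ ⊗ₖ (v • Q ⊗ₖ 1 + u • 1 ⊗ₖ S)
      + 1 ⊗ₖ (Q ⊗ₖ S - P ⊗ₖ R)
    let Y₂ := A₀ ⊗ₖ (v • Q ⊗ₖ 1 - u • 1 ⊗ₖ S) - A₁ ⊗ₖ (v • P ⊗ₖ 1 - u • 1 ⊗ₖ R)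
      + 1 ⊗ₖ (P ⊗ₖ S - Q ⊗ₖ R)
    Y₁ * Y₁ + Y₂ * Y₂ = (16 + 8 * u ^ 2 + 8 * v ^ 2) • 1
      - (8 * u) • (A₀ ⊗ₖ (P ⊗ₖ 1) + A₁ ⊗ₖ (Q ⊗ₖ 1))
      - (8 * v) • (A₀ ⊗ₖ (1 ⊗ₖ R) + A₁ ⊗ₖ (1 ⊗ₖ S)) := by
  intro Y₁ Y₂
  -- `ofNat_kronecker` turns `4 ⊗ₖ B` into a reindexed block matrix, so `4` is kept as `(4 : 𝕜) • 1`.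
  have hQQ : Q * Q = (4 : 𝕜) • 1 - P * P :=
    eq_sub_of_add_eq' (hPQ.trans (by rw [smul_one_eq_diagonal]; rfl))
  have hSS : S * S = (4 : 𝕜) • 1 - R * R :=
    eq_sub_of_add_eq' (hRS.trans (by rw [smul_one_eq_diagonal]; rfl))
  -- With `1 = 1 ⊗ₖ (1 ⊗ₖ 1)` every product factors through `mul_kronecker_mul`.
  rw [← one_kronecker_one (m := l), ← one_kronecker_one (m := m) (n := n)]
  simp only [Y₁, Y₂, Matrix.sub_mul, Matrix.mul_sub, Matrix.add_mul, Matrix.mul_add,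
    smul_mul_assoc, mul_smul_comm, ← Matrix.mul_kronecker_mul,
    Matrix.one_mul, Matrix.mul_one, hA₀, hA₁, hQQ, hQP, hSS, hSR,
    sub_kronecker, kronecker_sub, neg_kronecker, kronecker_neg, Matrix.kronecker_add,
    Matrix.smul_kronecker, Matrix.kronecker_smul]
  module

end SumOfSquares

section Monogamy

variable {l m n : Type*} [Fintype l] [Fintype m] [Fintype n]
  [DecidableEq l] [DecidableEq m] [DecidableEq n]
  {A₀ A₁ : Matrix l l ℂ} {P Q : Matrix m m ℂ} {R S : Matrix n n ℂ}

theorem exists_isHermitian_sum_of_squares_eq_chsh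
    (hA₀ : A₀.IsHermitian) (hA₁ : A₁.IsHermitian) (hA₀2 : A₀ * A₀ = 1) (hA₁2 : A₁ * A₁ = 1)
    (hP : P.IsHermitian) (hQ : Q.IsHermitian) (hPQ : P * P + Q * Q = 4) (hQP : Q * P = -(P * Q))
    (hR : R.IsHermitian) (hS : S.IsHermitian) (hRS : R * R + S * S = 4) (hSR : S * R = -(R * S))
    (u v : ℝ) :
    ∃ Y₁ Y₂ : Matrix (l × m × n) (l × m × n) ℂ, Y₁.IsHermitian ∧ Y₂.IsHermitian ∧
      Y₁ * Y₁ + Y₂ * Y₂ = ((16 + 8 * u ^ 2 + 8 * v ^ 2 : ℝ) : ℂ) • 1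
        - ((8 * u : ℝ) : ℂ) • (A₀ ⊗ₖ (P ⊗ₖ 1) + A₁ ⊗ₖ (Q ⊗ₖ 1))
        - ((8 * v : ℝ) : ℂ) • (A₀ ⊗ₖ (1 ⊗ₖ R) + A₁ ⊗ₖ (1 ⊗ₖ S)) := by
  have hsos := chsh_sum_of_squares A₀ A₁ P Q R S hA₀2 hA₁2 hPQ hQP hRS hSR u v
  push_cast
  refine ⟨_, _, ?_, ?_, hsos⟩ <;>
  simp only [IsHermitian, conjTranspose_add, conjTranspose_sub, conjTranspose_smul,
    conjTranspose_kronecker, conjTranspose_one, hA₀.eq, hA₁.eq, hP.eq, hQ.eq, hR.eq, hS.eq,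
    Complex.star_def, Complex.conj_ofReal]

theorem chsh_sq_add_sq_le_eight {ρ : Matrix (l × m × n) (l × m × n) ℂ}
    (hρ : ρ.PosSemidef) (hρtr : ρ.trace = 1)
    (hA₀ : A₀.IsHermitian) (hA₁ : A₁.IsHermitian) (hA₀2 : A₀ * A₀ = 1) (hA₁2 : A₁ * A₁ = 1)
    (hP : P.IsHermitian) (hQ : Q.IsHermitian) (hPQ : P * P + Q * Q = 4) (hQP : Q * P = -(P * Q))
    (hR : R.IsHermitian) (hS : S.IsHermitian) (hRS : R * R + S * S = 4) (hSR : S * R = -(R * S)) :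
    (ρ * (A₀ ⊗ₖ (P ⊗ₖ 1) + A₁ ⊗ₖ (Q ⊗ₖ 1))).trace.re ^ 2
      + (ρ * (A₀ ⊗ₖ (1 ⊗ₖ R) + A₁ ⊗ₖ (1 ⊗ₖ S))).trace.re ^ 2 ≤ 8 := by
  set s := (ρ * (A₀ ⊗ₖ (P ⊗ₖ 1) + A₁ ⊗ₖ (Q ⊗ₖ 1))).trace.re
  set t := (ρ * (A₀ ⊗ₖ (1 ⊗ₖ R) + A₁ ⊗ₖ (1 ⊗ₖ S))).trace.re
  have hlinear (u v : ℝ) : 8 * u * s + 8 * v * t ≤ 16 + 8 * u ^ 2 + 8 * v ^ 2 := by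
    obtain ⟨Y₁, Y₂, hY₁, hY₂, hsos⟩ := exists_isHermitian_sum_of_squares_eq_chsh
      hA₀ hA₁ hA₀2 hA₁2 hP hQ hPQ hQP hR hS hRS hSR u v
    have hpos := add_nonneg (hρ.re_trace_mul_mul_self_nonneg hY₁)
      (hρ.re_trace_mul_mul_self_nonneg hY₂)
    rw [← Complex.add_re, ← trace_add, ← Matrix.mul_add, hsos] at hpos
    simp only [Matrix.mul_sub, Matrix.mul_smul, trace_sub, trace_smul, hρtr,
      smul_eq_mul, Complex.sub_re, Complex.re_ofReal_mul, mul_one, Complex.ofReal_re] at hpos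
    linarith
  nlinarith [hlinear (s / 2) (t / 2)]

end Monogamy

theorem chsh_monogamy (dA dB dE : ℕ)
    (ρ : Matrix (Fin dA × Fin dB × Fin dE) (Fin dA × Fin dB × Fin dE) ℂ)
    (hρ : ρ.PosSemidef) (hρtr : ρ.trace = 1)
    (A₀ A₁ : Matrix (Fin dA) (Fin dA) ℂ)
    (B₀ B₁ : Matrix (Fin dB) (Fin dB) ℂ)
    (E₀ E₁ : Matrix (Fin dE) (Fin dE) ℂ)
    (hA₀ : A₀.IsHermitian) (hA₁ : A₁.IsHermitian)
    (hA₀2 : A₀ * A₀ = 1) (hA₁2 : A₁ * A₁ = 1)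
    (hB₀ : B₀.IsHermitian) (hB₁ : B₁.IsHermitian)
    (hB₀2 : B₀ * B₀ = 1) (hB₁2 : B₁ * B₁ = 1)
    (hE₀ : E₀.IsHermitian) (hE₁ : E₁.IsHermitian)
    (hE₀2 : E₀ * E₀ = 1) (hE₁2 : E₁ * E₁ = 1) :
    let SAB : ℝ := ((ρ * (A₀ ⊗ₖ ((B₀ + B₁) ⊗ₖ (1 : Matrix (Fin dE) (Fin dE) ℂ))
        + A₁ ⊗ₖ ((B₀ - B₁) ⊗ₖ (1 : Matrix (Fin dE) (Fin dE) ℂ)))).trace).re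
    let SAE : ℝ := ((ρ * (A₀ ⊗ₖ ((1 : Matrix (Fin dB) (Fin dB) ℂ) ⊗ₖ (E₀ + E₁))
        + A₁ ⊗ₖ ((1 : Matrix (Fin dB) (Fin dB) ℂ) ⊗ₖ (E₀ - E₁)))).trace).re
    SAB ^ 2 + SAE ^ 2 ≤ 8 ∧ (2 < SAB → SAE < 2) := by
  intro SAB SAE
  have hsq : SAB ^ 2 + SAE ^ 2 ≤ 8 := chsh_sq_add_sq_le_eight hρ hρtr hA₀ hA₁ hA₀2 hA₁2
    (hB₀.add hB₁) (hB₀.sub hB₁) (add_mul_self_add_sub_mul_self_of_mul_self_eq_one hB₀2 hB₁2)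
    (sub_mul_add_eq_neg_add_mul_sub_of_mul_self_eq_one hB₀2 hB₁2)
    (hE₀.add hE₁) (hE₀.sub hE₁) (add_mul_self_add_sub_mul_self_of_mul_self_eq_one hE₀2 hE₁2)
    (sub_mul_add_eq_neg_add_mul_sub_of_mul_self_eq_one hE₀2 hE₁2)
  exact ⟨hsq, fun hAB => by nlinarith⟩
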